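/- For every integer n ≥ 2 and every subset T of {1,…,n−1} containing no two consecutive integers, Σ_{w ∈ W̃_n, Dot(w) ⊇ T} t^{cro(w)} = t^{|T|} (1+t)^{n−2|T|} in ℤ[t]. -/

import Mathlib

open Polynomial Finset

/-- `[m]_t = 1 + t + ⋯ + t^(m-1)`, with `[0]_t = 0`. -/
noncomputable def qnum (m : ℕ) : Polynomial ℤ := ∑ i ∈ Finset.range m, X ^ i

/-- Given the previous value `prev` and a (sorted) list `s₁, …, s_ℓ`, the product
`[s₁ - prev - 1]_t · [s₂ - s₁ - 1]_t ⋯ [s_ℓ - s_{ℓ-1} - 1]_t`. -/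
noncomputable def gapProd : ℕ → List ℕ → Polynomial ℤ
  | _, [] => 1
  | prev, s :: rest => qnum (s - prev - 1) * gapProd s rest

/-- For a sorted list `s₁, …, s_ℓ`, the product
`[s₁]_t · [s₂ - s₁ - 1]_t ⋯ [s_ℓ - s_{ℓ-1} - 1]_t`. -/
noncomputable def psiProd : List ℕ → Polynomial ℤ
  | [] => 1
  | s :: rest => qnum s * gapProd s rest

/-- `S` contains no two consecutive integers. -/
def NoTwoConsec (S : Finset ℕ) : Prop := ∀ i ∈ S, i + 1 ∉ S

instance (S : Finset ℕ) : Decidable (NoTwoConsec S) :=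
  inferInstanceAs (Decidable (∀ i ∈ S, i + 1 ∉ S))

/-- The polynomial `ψ_{S,n}(t) ∈ ℤ[t]`. -/
noncomputable def psi (n : ℕ) (S : Finset ℕ) : Polynomial ℤ :=
  if S ⊆ Finset.Icc 1 (n - 1) ∧ NoTwoConsec S then
    if S = ∅ then qnum (n + 1)
    else X ^ S.card * psiProd (S.sort (· ≤ ·)) *
      (if n - 1 ∈ S then 1 else qnum (n - S.sup id))
  else 0

/-- The three symbols `•` (dot), `×` (cross), `␣` (blank). -/
inductive Mark : Type where
  | dot : Mark
  | cross : Mark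
  | blank : Mark
  deriving DecidableEq

instance instFintypeMark : Fintype Mark :=
  ⟨{Mark.dot, Mark.cross, Mark.blank}, by intro x; cases x <;> simp⟩

/-- The letter `w_i` (positions numbered `0, …, m-1`) of a sequence encoded as a
function `Fin m → Mark`; out-of-range positions read as blank. -/
def letterAt {m : ℕ} (w : Fin m → Mark) (i : ℕ) : Mark :=
  if h : i < m then w ⟨i, h⟩ else Mark.blank

/-- Membership in `W̃_n`: `w = w₀ w₁ … w_{n-1}` satisfies
(i) if `w_i = •` then `i ≥ 1` and `w_{i-1} = ×`;
(ii) a cross in position `j ≤ n-2` is immediately followed by a cross or a dot. -/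
def IsWt (n : ℕ) (w : Fin n → Mark) : Prop :=
  (∀ i, letterAt w i = Mark.dot → 1 ≤ i ∧ letterAt w (i - 1) = Mark.cross) ∧
  (∀ j, j ≤ n - 2 → letterAt w j = Mark.cross →
    letterAt w (j + 1) = Mark.cross ∨ letterAt w (j + 1) = Mark.dot)

/-- `Dot(w)`, the set of positions carrying a dot. -/
def DotSet (n : ℕ) (w : Fin n → Mark) : Finset ℕ :=
  (Finset.range n).filter fun i => letterAt w i = Mark.dot

/-- `cro(w)`, the number of crosses. -/
def cro (n : ℕ) (w : Fin n → Mark) : ℕ :=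
  ((Finset.range n).filter fun i => letterAt w i = Mark.cross).card

/-!
Recording only where the crosses are identifies `W̃_n` with the subsets `C ⊆ [0, n-1]`:
condition (ii) forces a dot at exactly the positions `i ∉ C` with `i - 1 ∈ C`, and
`cro(w) = |C|`. Under this identification `Dot(w) ⊇ T` says `T - 1 ⊆ C ⊆ [0, n-1] \ T`, an
interval of the subset lattice whose ends differ by `n - 2|T|` elements (as `T` has no two
consecutive elements, `T - 1` and `T` are disjoint), and summing `t^{|C|}` over it gives
`t^{|T|} (1+t)^{n-2|T|}`.
-/

namespace Finset

theorem sum_Icc_pow_card {α R : Type*} [DecidableEq α] [CommSemiring R] {s t : Finset α}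
    (h : s ⊆ t) (x : R) :
    ∑ u ∈ Icc s t, x ^ u.card = x ^ s.card * (1 + x) ^ (t.card - s.card) := by
  have hinj : Set.InjOn (s ∪ ·) ((t \ s).powerset : Set (Finset α)) := by
    intro d hd e he hde
    simp only [coe_powerset, Set.mem_preimage, Set.mem_powerset_iff, coe_subset] at hd he
    simpa only [union_sdiff_cancel_left (disjoint_of_subset_right hd disjoint_sdiff),
      union_sdiff_cancel_left (disjoint_of_subset_right he disjoint_sdiff)]
      using congrArg (· \ s) hde
  rw [Icc_eq_image_powerset h, sum_image hinj, ← card_sdiff_of_subset h, add_comm,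
    ← sum_pow_mul_eq_add_pow, mul_sum]
  refine sum_congr rfl fun d hd => ?_
  rw [card_union_of_disjoint (disjoint_of_subset_right (mem_powerset.1 hd) disjoint_sdiff),
    pow_add, one_pow, mul_one]

end Finset

namespace Wt

variable {n : ℕ}

def crossSet (n : ℕ) (w : Fin n → Mark) : Finset ℕ :=
  (range n).filter fun i => letterAt w i = Mark.cross

def markOfCrosses (C : Finset ℕ) (i : ℕ) : Mark :=
  if i ∈ C then Mark.cross else if 0 < i ∧ i - 1 ∈ C then Mark.dot else Mark.blank

def ofCrosses (n : ℕ) (C : Finset ℕ) : Fin n → Mark := fun i => markOfCrosses C i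

theorem letterAt_of_le (w : Fin n → Mark) {i : ℕ} (hi : n ≤ i) : letterAt w i = Mark.blank :=
  dif_neg (by omega)

theorem letterAt_ofCrosses (C : Finset ℕ) {i : ℕ} (hi : i < n) :
    letterAt (ofCrosses n C) i = markOfCrosses C i :=
  dif_pos hi

theorem lt_of_letterAt_ne_blank {w : Fin n → Mark} {i : ℕ} (h : letterAt w i ≠ Mark.blank) :
    i < n :=
  not_le.1 fun hi => h (letterAt_of_le w hi)

theorem mem_crossSet {w : Fin n → Mark} {i : ℕ} :
    i ∈ crossSet n w ↔ letterAt w i = Mark.cross := by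
  refine ⟨fun h => (mem_filter.1 h).2, fun h => mem_filter.2 ⟨?_, h⟩⟩
  exact mem_range.2 (lt_of_letterAt_ne_blank (by rw [h]; decide))

theorem mem_dotSet {w : Fin n → Mark} {i : ℕ} :
    i ∈ DotSet n w ↔ letterAt w i = Mark.dot := by
  refine ⟨fun h => (mem_filter.1 h).2, fun h => mem_filter.2 ⟨?_, h⟩⟩
  exact mem_range.2 (lt_of_letterAt_ne_blank (by rw [h]; decide))

theorem letterAt_eq_markOfCrosses {w : Fin n → Mark} (hw : IsWt n w) {i : ℕ} (hi : i < n) :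
    letterAt w i = markOfCrosses (crossSet n w) i := by
  unfold markOfCrosses
  simp only [mem_crossSet]
  rcases h : letterAt w i
  · obtain ⟨hpos, hprev⟩ := hw.1 i h
    simp [hprev, Nat.one_le_iff_ne_zero.1 hpos]
  · simp
  · -- a blank cannot follow a cross, by (ii) at position `i - 1`
    have hprev : ¬(0 < i ∧ letterAt w (i - 1) = Mark.cross) := by
      rintro ⟨hpos, hprev⟩
      have := hw.2 (i - 1) (by omega) hprev
      rw [Nat.sub_add_cancel hpos, h] at this
      simp at this
    simp [hprev]

theorem isWt_ofCrosses (hn : 2 ≤ n) (C : Finset ℕ) : IsWt n (ofCrosses n C) := by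
  constructor
  · intro i hi
    have hin := lt_of_letterAt_ne_blank (by rw [hi]; decide)
    rw [letterAt_ofCrosses C hin, markOfCrosses] at hi
    split_ifs at hi with hC hprev
    refine ⟨hprev.1, ?_⟩
    rw [letterAt_ofCrosses C (by omega), markOfCrosses, if_pos hprev.2]
  · intro j hj hj'
    rw [letterAt_ofCrosses C (by omega), markOfCrosses] at hj' ⊢
    split_ifs at hj' with hC
    split_ifs <;> simp_all

theorem crossSet_ofCrosses {C : Finset ℕ} (hC : C ⊆ range n) :
    crossSet n (ofCrosses n C) = C := by
  ext i
  rw [mem_crossSet]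
  by_cases hi : i < n
  · rw [letterAt_ofCrosses C hi, markOfCrosses]
    split_ifs <;> simp_all
  · rw [letterAt_of_le _ (not_lt.1 hi)]
    exact iff_of_false (by decide) fun h => hi (mem_range.1 (hC h))

theorem ofCrosses_crossSet {w : Fin n → Mark} (hw : IsWt n w) : ofCrosses n (crossSet n w) = w :=
  funext fun i => by simpa [letterAt, ofCrosses] using (letterAt_eq_markOfCrosses hw i.isLt).symm

theorem crossSet_subset_range (w : Fin n → Mark) : crossSet n w ⊆ range n := filter_subset _ _

theorem subset_dotSet_iff {T : Finset ℕ} (hT : T ⊆ Icc 1 (n - 1)) {w : Fin n → Mark}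
    (hw : IsWt n w) :
    T ⊆ DotSet n w ↔ T.image (· - 1) ⊆ crossSet n w ∧ Disjoint (crossSet n w) T := by
  have hdot : ∀ s ∈ T,
      letterAt w s = Mark.dot ↔ s - 1 ∈ crossSet n w ∧ s ∉ crossSet n w := by
    intro s hs
    obtain ⟨hs1, hsn⟩ := mem_Icc.1 (hT hs)
    rw [letterAt_eq_markOfCrosses hw (by omega), markOfCrosses]
    split_ifs with hC hprev <;> simp_all
    exact hprev (by omega)
  simp only [subset_iff, mem_dotSet, mem_image, forall_exists_index, and_imp,
    forall_apply_eq_imp_iff₂, disjoint_right]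
  exact ⟨fun h => ⟨fun s hs => ((hdot s hs).1 (h hs)).1,
      fun s hs => ((hdot s hs).1 (h hs)).2⟩,
    fun h s hs => (hdot s hs).2 ⟨h.1 s hs, h.2 hs⟩⟩

open scoped Classical in
theorem sum_filter_isWt_subset_dotSet {M : Type*} [AddCommMonoid M] (hn : 2 ≤ n)
    {T : Finset ℕ} (hT : T ⊆ Icc 1 (n - 1)) (f : ℕ → M) :
    ∑ w ∈ univ.filter (fun w : Fin n → Mark => IsWt n w ∧ T ⊆ DotSet n w), f (cro n w) =
      ∑ C ∈ Icc (T.image (· - 1)) (range n \ T), f C.card := by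
  refine sum_nbij' (crossSet n) (ofCrosses n) ?_ ?_ ?_ ?_ fun _ _ => rfl
  · intro w hw
    obtain ⟨hw, hTw⟩ := (mem_filter.1 hw).2
    obtain ⟨hpred, hdisj⟩ := (subset_dotSet_iff hT hw).1 hTw
    exact mem_Icc.2 ⟨hpred, subset_sdiff.2 ⟨crossSet_subset_range w, hdisj⟩⟩
  · intro C hC
    obtain ⟨hpred, hCT⟩ := mem_Icc.1 hC
    obtain ⟨hCn, hdisj⟩ := subset_sdiff.1 hCT
    have hw := isWt_ofCrosses hn C
    refine mem_filter.2 ⟨mem_univ _, hw, (subset_dotSet_iff hT hw).2 ?_⟩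
    rw [crossSet_ofCrosses hCn]
    exact ⟨hpred, hdisj⟩
  · exact fun w hw => ofCrosses_crossSet (mem_filter.1 hw).2.1
  · exact fun C hC => crossSet_ofCrosses (subset_sdiff.1 (mem_Icc.1 hC).2).1

end Wt

theorem NoTwoConsec.image_sub_one_subset {T : Finset ℕ} (h : NoTwoConsec T) {n : ℕ}
    (hT : T ⊆ Icc 1 (n - 1)) : T.image (· - 1) ⊆ range n \ T := by
  intro x hx
  obtain ⟨s, hs, rfl⟩ := mem_image.1 hx
  have hs' := mem_Icc.1 (hT hs)
  refine mem_sdiff.2 ⟨mem_range.2 (by omega), fun hs₁ => h _ hs₁ ?_⟩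
  rwa [Nat.sub_add_cancel hs'.1]

open scoped Classical in
/-- For `n ≥ 2` and `T ⊆ [1, n-1]` with no two consecutive integers:
`∑_{w ∈ W̃_n, Dot(w) ⊇ T} t^{cro(w)} = t^{|T|} (1+t)^{n-2|T|}`. -/
theorem Wt_genfun_superset (n : ℕ) (hn : 2 ≤ n) (T : Finset ℕ)
    (hT1 : T ⊆ Finset.Icc 1 (n - 1)) (hT2 : NoTwoConsec T) :
    ∑ w ∈ Finset.univ.filter (fun w : Fin n → Mark => IsWt n w ∧ T ⊆ DotSet n w),
      (X : Polynomial ℤ) ^ cro n w =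
      X ^ T.card * (1 + X) ^ (n - 2 * T.card) := by
  have hcard : (T.image (· - 1)).card = T.card := card_image_of_injOn fun a ha b hb hab => by
    have := mem_Icc.1 (hT1 ha)
    have := mem_Icc.1 (hT1 hb)
    omega
  have hTn : T ⊆ range n := fun s hs => mem_range.2 (by have := mem_Icc.1 (hT1 hs); omega)
  rw [Wt.sum_filter_isWt_subset_dotSet hn hT1 (X ^ ·),
    sum_Icc_pow_card (hT2.image_sub_one_subset hT1), hcard, card_sdiff_of_subset hTn, card_range,
    Nat.sub_sub, ← two_mul]
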